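/- Let U > 0, V₀, V₁ > 0 with V₁ ≥ V₀, K ≥ 1 an integer, Λ(x,λ) = erf((x-0.5-λ)/√(2λ)). Define h(ξ_R) = (1/4)[2 - (1+Λ(ξ_R,U))Λ(ξ_FC,V₀) + (-1+Λ(ξ_R,U))Λ(ξ_FC,V₁)] for fixed ξ_FC with ξ_FC + V₀ > 0.5 and ξ_FC + V₁ > 0.5. Then ξ_R ↦ h(ξ_R)^K is convex on the set {ξ_R : ξ_R ≥ U + 0.5}. -/

import Mathlib

/-- The Gauss error function `erf z = (2/√π) ∫_0^z e^{-t²} dt`. -/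
noncomputable def erf (z : ℝ) : ℝ := (2 / Real.sqrt Real.pi) * ∫ t in (0:ℝ)..z, Real.exp (-t ^ 2)

/-- The Gaussian (continuity-corrected) approximation of the Poisson CDF. -/
noncomputable def Lam (x lam : ℝ) : ℝ := erf ((x - 0.5 - lam) / Real.sqrt (2 * lam))

/-!
`ξ ↦ Λ(ξ, U)` is `erf`, which is concave on `[0, ∞)`, composed with a nondecreasing affine map
sending `[U + 0.5, ∞)` into `[0, ∞)`. And `h` is affine in `Λ(ξ, U)` with slope
`-(Λ(ξ_FC, V₀) - Λ(ξ_FC, V₁)) / 4 ≤ 0`: with `c = ξ_FC - 0.5 > -V₀`, the argument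
`(c - V) / √(2V)` of `erf` decreases as `V` grows from `V₀`. So `h` is convex; it is nonnegative
because `erf ≤ 1`, and a nonnegative convex function stays convex under `(·) ^ K`.
-/

open Real Set MeasureTheory

lemma hasDerivAt_erf (z : ℝ) : HasDerivAt erf (2 / √π * exp (-z ^ 2)) z := by
  have hc : Continuous fun t : ℝ => exp (-t ^ 2) := by fun_prop
  exact (intervalIntegral.integral_hasDerivAt_right (hc.intervalIntegrable 0 z)
    (hc.stronglyMeasurableAtFilter _ _) hc.continuousAt).const_mul _

lemma differentiable_erf : Differentiable ℝ erf := fun z => (hasDerivAt_erf z).differentiableAt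

lemma monotone_erf : Monotone erf :=
  monotone_of_hasDerivAt_nonneg hasDerivAt_erf fun _ => by positivity

lemma erf_le_one (z : ℝ) : erf z ≤ 1 := by
  have hint : IntegrableOn (fun t : ℝ => exp (-t ^ 2)) (Ioi 0) := by
    simpa using (integrable_exp_neg_mul_sq one_pos).integrableOn
  have hhalf : ∫ t in Ioi (0 : ℝ), exp (-t ^ 2) = √π / 2 := by
    simpa using integral_gaussian_Ioi 1
  have hle : ∫ t in (0 : ℝ)..|z|, exp (-t ^ 2) ≤ √π / 2 := by
    rw [intervalIntegral.integral_of_le (abs_nonneg z), ← hhalf]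
    exact setIntegral_mono_set hint (.of_forall fun t => (exp_pos _).le)
      Ioc_subset_Ioi_self.eventuallyLE
  calc erf z ≤ erf |z| := monotone_erf (le_abs_self z)
    _ ≤ 2 / √π * (√π / 2) := by unfold erf; gcongr
    _ = 1 := by field_simp

lemma concaveOn_erf : ConcaveOn ℝ (Ici 0) erf := by
  refine AntitoneOn.concaveOn_of_deriv (convex_Ici 0) differentiable_erf.continuous.continuousOn
    differentiable_erf.differentiableOn fun x hx y hy hxy => ?_
  rw [interior_Ici, mem_Ioi] at hx hy
  rw [(hasDerivAt_erf x).deriv, (hasDerivAt_erf y).deriv]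
  gcongr

lemma ConcaveOn.comp_sub_div {f : ℝ → ℝ} (hf : ConcaveOn ℝ (Ici 0) f) (c : ℝ) {s : ℝ}
    (hs : 0 ≤ s) : ConcaveOn ℝ (Ici c) fun x => f ((x - c) / s) := by
  refine ((hf.comp_affineMap (s⁻¹ • (AffineMap.id ℝ ℝ - AffineMap.const ℝ ℝ c))).subset
    (fun x hx => ?_) (convex_Ici c)).congr fun x _ => ?_
  · simp only [AffineMap.coe_smul, AffineMap.coe_sub, AffineMap.coe_id, AffineMap.coe_const,
      mem_preimage, Pi.smul_apply, Pi.sub_apply, id_eq, Function.const_apply, smul_eq_mul, mem_Ici]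
    exact mul_nonneg (inv_nonneg.2 hs) (sub_nonneg.2 hx)
  · simp only [AffineMap.coe_smul, AffineMap.coe_sub, AffineMap.coe_id, AffineMap.coe_const,
      Function.comp_apply, Pi.smul_apply, Pi.sub_apply, id_eq, Function.const_apply, smul_eq_mul,
      div_eq_inv_mul]

lemma concaveOn_Lam (lam : ℝ) : ConcaveOn ℝ (Ici (lam + 0.5)) fun x => Lam x lam :=
  (concaveOn_erf.comp_sub_div _ (sqrt_nonneg _)).congr fun x _ => by
    rw [Lam, sub_sub, add_comm lam]

lemma sub_div_sqrt_two_mul_le {c V₀ V₁ : ℝ} (hV₀ : 0 < V₀) (hV : V₀ ≤ V₁) (hc : 0 < c + V₀) :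
    (c - V₁) / √(2 * V₁) ≤ (c - V₀) / √(2 * V₀) := by
  set t₀ := √(2 * V₀)
  set t₁ := √(2 * V₁)
  have ht₀ : 0 < t₀ := sqrt_pos.2 (by linarith)
  have ht₁ : 0 < t₁ := sqrt_pos.2 (by linarith)
  have ht : t₀ ≤ t₁ := sqrt_le_sqrt (by linarith)
  have hV₀' : V₀ = t₀ ^ 2 / 2 := by rw [sq_sqrt (by linarith)]; ring
  have hV₁' : V₁ = t₁ ^ 2 / 2 := by rw [sq_sqrt (by linarith)]; ring
  -- with `V = t² / 2`, the quotient is `c / t - t / 2`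
  have hdiff : (c - V₀) / t₀ - (c - V₁) / t₁ = (t₁ - t₀) * (c + t₀ * t₁ / 2) / (t₀ * t₁) := by
    rw [hV₀', hV₁']; field_simp; ring
  have hpos : 0 ≤ c + t₀ * t₁ / 2 := by nlinarith
  have : 0 ≤ (c - V₀) / t₀ - (c - V₁) / t₁ := by
    rw [hdiff]; exact div_nonneg (mul_nonneg (sub_nonneg.2 ht) hpos) (by positivity)
  linarith

lemma Lam_le_Lam_of_le {x V₀ V₁ : ℝ} (hV₀ : 0 < V₀) (hV : V₀ ≤ V₁) (hx : 0.5 < x + V₀) :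
    Lam x V₁ ≤ Lam x V₀ :=
  monotone_erf (sub_div_sqrt_two_mul_le hV₀ hV (by linarith))

noncomputable def pfaTilde (a b l : ℝ) : ℝ := 1 / 4 * (2 - (1 + l) * a + (-1 + l) * b)

lemma pfaTilde_nonneg {a b l : ℝ} (hba : b ≤ a) (ha : a ≤ 1) (hl : l ≤ 1) :
    0 ≤ pfaTilde a b l := by
  unfold pfaTilde; nlinarith

lemma ConcaveOn.convexOn_pfaTilde_pow {E : Type*} [AddCommGroup E] [Module ℝ E] {s : Set E}
    {L : E → ℝ} (hL : ConcaveOn ℝ s L) (hL₁ : ∀ x ∈ s, L x ≤ 1) {a b : ℝ} (hba : b ≤ a)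
    (ha : a ≤ 1) (K : ℕ) : ConvexOn ℝ s fun x => pfaTilde a b (L x) ^ K := by
  have hconv : ConvexOn ℝ s fun x => pfaTilde a b (L x) :=
    (hL.neg.smul (c := (a - b) / 4) (by linarith)).add_const ((2 - a - b) / 4) |>.congr
      fun x _ => by simp only [pfaTilde, Pi.add_apply, Pi.neg_apply, smul_eq_mul]; ring
  exact hconv.pow (fun x hx => pfaTilde_nonneg hba ha (hL₁ x hx)) K

theorem Pfa_tilde_pow_convex_general (U V₀ V₁ ξFC : ℝ) (hV₀ : 0 < V₀)
    (hV : V₀ ≤ V₁) (h₀ : ξFC + V₀ > 0.5) (K : ℕ) :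
    ConvexOn ℝ (Set.Ici (U + 0.5))
      (fun ξR : ℝ => ((1 / 4) * (2 - (1 + Lam ξR U) * Lam ξFC V₀ +
        (-1 + Lam ξR U) * Lam ξFC V₁)) ^ K) :=
  (concaveOn_Lam U).convexOn_pfaTilde_pow (fun _ _ => erf_le_one _)
    (Lam_le_Lam_of_le hV₀ hV h₀) (erf_le_one _) K

theorem Pfa_tilde_pow_convex (U V₀ V₁ ξFC : ℝ) (hU : 0 < U) (hV₀ : 0 < V₀) (hV₁ : 0 < V₁)
    (hV : V₀ ≤ V₁) (h₀ : ξFC + V₀ > 0.5) (h₁ : ξFC + V₁ > 0.5) (K : ℕ) (hK : 1 ≤ K) :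
    ConvexOn ℝ (Set.Ici (U + 0.5))
      (fun ξR : ℝ => ((1 / 4) * (2 - (1 + Lam ξR U) * Lam ξFC V₀ +
        (-1 + Lam ξR U) * Lam ξFC V₁)) ^ K) :=
  Pfa_tilde_pow_convex_general U V₀ V₁ ξFC hV₀ hV h₀ K
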